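/- (Skof local stability) Let T > 0 and let g : [−T, T) → ℂ satisfy |g(x+y) − g(x) − g(y)| ≤ θ whenever x, y, x+y all lie in [−T, T). Then there exists an additive function G : ℝ → ℂ with |g(x) − G(x)| ≤ 3θ for all x ∈ [−T, T). -/

import Mathlib

/-!
Extend `g` from `[-T, T)` to all of `ℝ` by `g (r + 2kT) = g r - 2k • g (-T)`. Reducing `x`, `y` and
`x + y` modulo `2T`, the defect of the extension at `(x, y)` is the defect of `g` at the reduced
points, up to a wrap-around through `±T` which costs at most two more defects of `g`; so the
extension `f` is `3θ`-additive on all of `ℝ`. Hyers' direct method, `G x = lim f (2ⁿ x) / 2ⁿ`,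
then gives an additive `G` within `3θ` of `f`, and `f` agrees with `g` on `[-T, T)`.
-/

open Filter Topology Set

section HyersUlam

variable {E F : Type*} [AddCommMonoid E] [NormedAddCommGroup F] [NormedSpace ℝ F]
  {f : E → F} {ε : ℝ}

noncomputable def hyersSeq (f : E → F) (x : E) (n : ℕ) : F := ((2 : ℝ) ^ n)⁻¹ • f (2 ^ n • x)

lemma norm_hyersSeq_add_sub_le (hf : ∀ x y, ‖f (x + y) - f x - f y‖ ≤ ε) (x y : E) (n : ℕ) :
    ‖hyersSeq f (x + y) n - hyersSeq f x n - hyersSeq f y n‖ ≤ ε / 2 ^ n := by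
  have hsplit : hyersSeq f (x + y) n - hyersSeq f x n - hyersSeq f y n =
      ((2 : ℝ) ^ n)⁻¹ • (f (2 ^ n • x + 2 ^ n • y) - f (2 ^ n • x) - f (2 ^ n • y)) := by
    simp only [hyersSeq, smul_add, smul_sub]
  rw [hsplit, norm_smul, norm_inv, norm_pow, Real.norm_two, inv_mul_eq_div]
  gcongr
  exact hf _ _

lemma dist_hyersSeq_succ_le (hf : ∀ x y, ‖f (x + y) - f x - f y‖ ≤ ε) (x : E) (n : ℕ) :
    dist (hyersSeq f x n) (hyersSeq f x (n + 1)) ≤ ε / 2 / 2 ^ n := by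
  set y := 2 ^ n • x
  have hdouble : 2 ^ (n + 1) • x = y + y := by rw [pow_succ, mul_two, add_smul]
  have hsplit : hyersSeq f x n - hyersSeq f x (n + 1) =
      -(((2 : ℝ) ^ (n + 1))⁻¹ • (f (y + y) - f y - f y)) := by
    rw [hyersSeq, hyersSeq, hdouble, pow_succ]
    module
  rw [dist_eq_norm, hsplit, norm_neg, norm_smul, norm_inv, norm_pow, Real.norm_two,
    inv_mul_eq_div, pow_succ, div_div, mul_comm (2 : ℝ)]
  gcongr
  exact hf _ _

theorem exists_addMonoidHom_norm_sub_le [CompleteSpace F]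
    (hf : ∀ x y, ‖f (x + y) - f x - f y‖ ≤ ε) : ∃ G : E →+ F, ∀ x, ‖f x - G x‖ ≤ ε := by
  have hcauchy (x : E) : CauchySeq (hyersSeq f x) :=
    cauchySeq_of_dist_le_of_summable _ (dist_hyersSeq_succ_le hf x) (summable_geometric_two' ε)
  choose G hG using fun x ↦ cauchySeq_tendsto_of_complete (hcauchy x)
  have hG_add (x y : E) : G (x + y) = G x + G y := by
    have hdefect : Tendsto (fun n ↦ hyersSeq f (x + y) n - hyersSeq f x n - hyersSeq f y n)
        atTop (𝓝 0) := by
      refine squeeze_zero_norm (norm_hyersSeq_add_sub_le hf x y) ?_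
      simpa using tendsto_const_nhds.div_atTop (tendsto_pow_atTop_atTop_of_one_lt one_lt_two)
    have h0 := tendsto_nhds_unique (((hG (x + y)).sub (hG x)).sub (hG y)) hdefect
    rwa [sub_sub, sub_eq_zero] at h0
  refine ⟨AddMonoidHom.mk' G hG_add, fun x ↦ ?_⟩
  have hdist := dist_le_tsum_of_dist_le_of_tendsto₀ _ (dist_hyersSeq_succ_le hf x)
    (summable_geometric_two' ε) (hG x)
  simpa [hyersSeq, dist_eq_norm, tsum_geometric_two'] using hdist

end HyersUlam

section SkofExtension

variable {F : Type*} [SeminormedAddCommGroup F] {T θ : ℝ} {g : ℝ → F}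

lemma Ico_neg_neg_add_two_mul (T : ℝ) : Ico (-T) (-T + 2 * T) = Ico (-T) T := by
  rw [show -T + 2 * T = T by ring]

/-- Here `k ∈ {-1, 0, 1}`; when `k = ±1` the defect splits into three defects of `g` on
`[-T, T)`, obtained by shifting `a` and `b` by `∓T`. -/
lemma norm_wrap_defect_le
    (h : ∀ x y : ℝ, x ∈ Ico (-T) T → y ∈ Ico (-T) T → x + y ∈ Ico (-T) T →
      ‖g (x + y) - g x - g y‖ ≤ θ)
    {a b r : ℝ} (ha : a ∈ Ico (-T) T) (hb : b ∈ Ico (-T) T) (hr : r ∈ Ico (-T) T) {k : ℤ}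
    (hk : a + b = r + k • (2 * T)) :
    ‖g r - g a - g b - (2 * k) • g (-T)‖ ≤ 3 * θ := by
  obtain ⟨ha₁, ha₂⟩ := ha
  obtain ⟨hb₁, hb₂⟩ := hb
  obtain ⟨hr₁, hr₂⟩ := hr
  rw [zsmul_eq_mul] at hk
  have hmT : -T ∈ Ico (-T) T := ⟨le_rfl, by linarith⟩
  have hk₁ : -1 ≤ k :=
    Int.add_one_le_iff.mpr (by exact_mod_cast (by nlinarith : (-1 - 1 : ℝ) < k))
  have hk₂ : k ≤ 1 := Int.lt_add_one_iff.mp (by exact_mod_cast (by nlinarith : (k : ℝ) < 1 + 1))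
  interval_cases k <;> norm_num at hk
  · have e₁ := h (a + T) (b + T) ⟨by linarith, by linarith⟩ ⟨by linarith, by linarith⟩
      ⟨by linarith, by linarith⟩
    have e₂ := h (a + T) (-T) ⟨by linarith, by linarith⟩ hmT ⟨by linarith, by linarith⟩
    have e₃ := h (b + T) (-T) ⟨by linarith, by linarith⟩ hmT ⟨by linarith, by linarith⟩
    rw [show a + T + (b + T) = r by linarith] at e₁
    rw [add_neg_cancel_right] at e₂ e₃
    calc ‖g r - g a - g b - (2 * (-1 : ℤ)) • g (-T)‖
        = ‖(g r - g (a + T) - g (b + T)) + -(g a - g (a + T) - g (-T))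
            + -(g b - g (b + T) - g (-T))‖ := by congr 1; module
      _ ≤ 3 * θ := norm_add₃_le.trans (by rw [norm_neg, norm_neg]; linarith)
  · have e := h a b ⟨ha₁, ha₂⟩ ⟨hb₁, hb₂⟩ ⟨by linarith, by linarith⟩
    rw [show a + b = r by linarith] at e
    have hθ : 0 ≤ θ := (norm_nonneg _).trans e
    simpa using e.trans (by linarith)
  · have e₁ := h (a - T) (b - T) ⟨by linarith, by linarith⟩ ⟨by linarith, by linarith⟩
      ⟨by linarith, by linarith⟩
    have e₂ := h a (-T) ⟨ha₁, ha₂⟩ hmT ⟨by linarith, by linarith⟩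
    have e₃ := h b (-T) ⟨hb₁, hb₂⟩ hmT ⟨by linarith, by linarith⟩
    rw [show a - T + (b - T) = r by linarith] at e₁
    rw [← sub_eq_add_neg] at e₂ e₃
    calc ‖g r - g a - g b - (2 * (1 : ℤ)) • g (-T)‖
        = ‖(g r - g (a - T) - g (b - T)) + (g (a - T) - g a - g (-T))
            + (g (b - T) - g b - g (-T))‖ := by congr 1; module
      _ ≤ 3 * θ := norm_add₃_le.trans (by linarith)

/-- `-g (-T)` stands in for the missing value `g T`, since an additive `G` satisfies
`G (r + 2kT) = G r + 2k • G T`. -/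
noncomputable def skofExtension (hT : 0 < T) (g : ℝ → F) (x : ℝ) : F :=
  g (toIcoMod (mul_pos two_pos hT) (-T) x) - (2 * toIcoDiv (mul_pos two_pos hT) (-T) x) • g (-T)

lemma skofExtension_add_zsmul (hT : 0 < T) {r : ℝ} (hr : r ∈ Ico (-T) T) (k : ℤ) :
    skofExtension hT g (r + k • (2 * T)) = g r - (2 * k) • g (-T) := by
  have hr' : r ∈ Ico (-T) (-T + 2 * T) := by rwa [Ico_neg_neg_add_two_mul]
  have hdiv : toIcoDiv (mul_pos two_pos hT) (-T) r = 0 :=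
    (toIcoDiv_eq_iff _).mpr (by simpa using hr')
  rw [skofExtension, toIcoMod_add_zsmul, toIcoDiv_add_zsmul, (toIcoMod_eq_self _).mpr hr', hdiv,
    zero_add]

lemma skofExtension_of_mem (hT : 0 < T) {r : ℝ} (hr : r ∈ Ico (-T) T) :
    skofExtension hT g r = g r := by
  simpa using skofExtension_add_zsmul (g := g) hT hr 0

lemma norm_skofExtension_add_sub_le (hT : 0 < T)
    (h : ∀ x y : ℝ, x ∈ Ico (-T) T → y ∈ Ico (-T) T → x + y ∈ Ico (-T) T →
      ‖g (x + y) - g x - g y‖ ≤ θ) (x y : ℝ) :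
    ‖skofExtension hT g (x + y) - skofExtension hT g x - skofExtension hT g y‖ ≤ 3 * θ := by
  have hp : 0 < 2 * T := mul_pos two_pos hT
  have hdecomp (z : ℝ) : ∃ r ∈ Ico (-T) T, ∃ k : ℤ, z = r + k • (2 * T) :=
    ⟨_, Ico_neg_neg_add_two_mul T ▸ toIcoMod_mem_Ico hp (-T) z, _,
      (toIcoMod_add_toIcoDiv_zsmul hp (-T) z).symm⟩
  obtain ⟨a, ha, m, rfl⟩ := hdecomp x
  obtain ⟨b, hb, n, rfl⟩ := hdecomp y
  obtain ⟨r, hr, k, hk⟩ := hdecomp (a + b)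
  have hsum : a + m • (2 * T) + (b + n • (2 * T)) = r + (k + m + n) • (2 * T) := by
    rw [add_add_add_comm, hk, ← add_smul, add_assoc, ← add_smul, add_assoc]
  rw [hsum, skofExtension_add_zsmul hT hr, skofExtension_add_zsmul hT ha,
    skofExtension_add_zsmul hT hb]
  convert norm_wrap_defect_le h ha hb hr hk using 2
  module

end SkofExtension

theorem skof_local_stability_general (T θ : ℝ) (hT : 0 < T) (g : ℝ → ℂ)
    (h : ∀ x y : ℝ, x ∈ Set.Ico (-T) T → y ∈ Set.Ico (-T) T →
      x + y ∈ Set.Ico (-T) T → ‖g (x + y) - g x - g y‖ ≤ θ) :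
    ∃ G : ℝ → ℂ,
      (∀ x y : ℝ, G (x + y) = G x + G y) ∧
      (∀ x ∈ Set.Ico (-T) T, ‖g x - G x‖ ≤ 3 * θ) := by
  obtain ⟨G, hG⟩ := exists_addMonoidHom_norm_sub_le (norm_skofExtension_add_sub_le hT h)
  refine ⟨G, map_add G, fun x hx ↦ ?_⟩
  simpa only [skofExtension_of_mem hT hx] using hG x

/-- Skof's local stability: if `g` is θ-additive on `[−T, T)`, then there is
an additive `G : ℝ → ℂ` with `|g(x) − G(x)| ≤ 3θ` on `[−T, T)`. -/
theorem skof_local_stability (T θ : ℝ) (hT : 0 < T) (hθ : 0 ≤ θ) (g : ℝ → ℂ)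
    (h : ∀ x y : ℝ, x ∈ Set.Ico (-T) T → y ∈ Set.Ico (-T) T →
      x + y ∈ Set.Ico (-T) T → ‖g (x + y) - g x - g y‖ ≤ θ) :
    ∃ G : ℝ → ℂ,
      (∀ x y : ℝ, G (x + y) = G x + G y) ∧
      (∀ x ∈ Set.Ico (-T) T, ‖g x - G x‖ ≤ 3 * θ) :=
  skof_local_stability_general T θ hT g h
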